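/- In bond percolation on the m×n rectangle R, exactly one of the following holds: R contains an open left-right crossing, or R contains a closed dual top-bottom crossing. -/

import Mathlib

/-- The unit-square grid graph on `ℤ²` (used both for the lattice
`G_d = ℤ² + (1/2,1/2)`, whose vertex `(i,j)` sits at the physical point
`(i+1/2, j+1/2) - (1/2,1/2) = (i,j)`, and for its dual lattice, whose vertex
`(i,j)` sits at the physical point `(i-1/2, j-1/2)`). -/
def gridGraph : SimpleGraph (ℤ × ℤ) where
  Adj u v := (u.1 - v.1).natAbs + (u.2 - v.2).natAbs = 1
  symm := by constructor; intro u v h; omega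
  loopless := by constructor; intro u h; simp at h

/-- The dual edge `f` (in the dual lattice, whose vertex `(i,j)` sits at
`(i-1/2, j-1/2)`) crosses the lattice edge `e` (whose vertex `(i,j)` sits at
`(i,j)`) perpendicularly. -/
def dualCross (e f : Sym2 (ℤ × ℤ)) : Prop :=
  ∃ i j : ℤ,
    (e = s(((i, j) : ℤ × ℤ), (i + 1, j)) ∧ f = s(((i + 1, j) : ℤ × ℤ), (i + 1, j + 1))) ∨
    (e = s(((i, j) : ℤ × ℤ), (i, j + 1)) ∧ f = s(((i, j + 1) : ℤ × ℤ), (i + 1, j + 1)))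

/-- A dual edge is closed iff the unique lattice edge it crosses perpendicularly
is closed. -/
def dualClosed (ω : Sym2 (ℤ × ℤ) → Prop) (f : Sym2 (ℤ × ℤ)) : Prop :=
  ∃ e, dualCross e f ∧ ¬ ω e

/-- A left-right crossing of the rectangle `R = [0,m] × [0,n]`: a self-avoiding
path in the lattice from the left side to the right side, all of whose vertices
lie in `R`, meeting the left side only at its first vertex and the right side
only at its last vertex. -/
def isLRCrossing (m n : ℤ) {u v : ℤ × ℤ} (w : gridGraph.Walk u v) : Prop :=
  w.IsPath ∧ u.1 = 0 ∧ 0 ≤ u.2 ∧ u.2 ≤ n ∧ v.1 = m ∧ 0 ≤ v.2 ∧ v.2 ≤ n ∧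
  (∀ x ∈ w.support, 0 ≤ x.1 ∧ x.1 ≤ m ∧ 0 ≤ x.2 ∧ x.2 ≤ n) ∧
  (∀ x ∈ w.support, x.1 = 0 → x = u) ∧ (∀ x ∈ w.support, x.1 = m → x = v)

/-- A dual top-bottom crossing of `R = [0,m] × [0,n]`: a self-avoiding path in the
dual lattice (vertex `(i,j)` at physical point `(i-1/2, j-1/2)`) whose first edge
crosses the top side of `R`, whose last edge crosses the bottom side, and all of
whose intermediate vertices lie in the interior of `R`. -/
def isTBDualCrossing (m n : ℤ) {a b : ℤ × ℤ} (w : gridGraph.Walk a b) : Prop :=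
  w.IsPath ∧ a.2 = n + 1 ∧ 1 ≤ a.1 ∧ a.1 ≤ m ∧ b.2 = 0 ∧ 1 ≤ b.1 ∧ b.1 ≤ m ∧
  ∀ x ∈ w.support, x ≠ a → x ≠ b → (1 ≤ x.1 ∧ x.1 ≤ m ∧ 1 ≤ x.2 ∧ x.2 ≤ n)

/-
Not both: for a closed dual top-bottom crossing `p` and a primal vertex `x`, let `ρ x ∈ ZMod 2` be
the parity of the number of times `p` crosses the horizontal half-line running left from `x`.
Since `p` avoids the dual edges of open edges, a cut-counting argument shows that `ρ` is constant
along open edges of `R`; but `ρ = 0` on the left side (`p` stays in the columns `1 .. m`) and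
`ρ = 1` on the right side (`p` runs from above `R` to below it).

At least one: let `S` be the set of vertices joined to the left side by open paths in `R`, and
suppose it misses the right side. The dual edges separating `S` from its complement in `R` are
closed. In the graph they form, interior dual vertices have even degree and the top vertex
`(i, n + 1)` has degree `S(i - 1, n) + S(i, n)` mod 2, which sums along the top row to
`S(0, n) + S(m, n) = 1`. By handshaking, the part of this graph joined to the top row reaches the
bottom row, and a shortest such walk is a closed dual top-bottom crossing.
-/

namespace SimpleGraph

variable {V : Type*} {G : SimpleGraph V}

theorem Walk.sum_darts_sub {M : Type*} [AddCommGroup M] {u v : V} (p : G.Walk u v)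
    (f : V → M) : (p.darts.map fun d => f d.snd - f d.fst).sum = f v - f u := by
  induction p with
  | nil => simp
  | cons h p ih => simp only [Walk.darts_cons, List.map_cons, List.sum_cons, ih]; abel

theorem Walk.edge_mem_edges_of_mem_darts {u v : V} {p : G.Walk u v} {d : G.Dart}
    (hd : d ∈ p.darts) : d.edge ∈ p.edges :=
  p.edges_eq_map_darts ▸ List.mem_map_of_mem hd

theorem Walk.mem_of_mem_support_of_adj {P : Set V} (hP : ∀ x y, G.Adj x y → y ∈ P) {u v : V}
    (hu : u ∈ P) (p : G.Walk u v) : ∀ x ∈ p.support, x ∈ P := by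
  induction p with
  | nil => simpa using hu
  | cons h p ih =>
    simp only [Walk.support_cons, List.mem_cons, forall_eq_or_imp]
    exact ⟨hu, ih (hP _ _ h)⟩

theorem Reachable.exists_isPath_between {A B : Set V} {a b : V} (ha : a ∈ A) (hb : b ∈ B)
    (h : G.Reachable a b) :
    ∃ a' ∈ A, ∃ b' ∈ B, ∃ p : G.Walk a' b', p.IsPath ∧
      (∀ x ∈ p.support, x ∈ A → x = a') ∧ ∀ x ∈ p.support, x ∈ B → x = b' := by
  classical
  obtain ⟨p₀⟩ := h
  -- a shortest walk from `A` to `B`, made a path by `bypass`, does the job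
  have hex : ∃ k, ∃ a ∈ A, ∃ b ∈ B, ∃ p : G.Walk a b, p.length = k :=
    ⟨_, a, ha, b, hb, p₀, rfl⟩
  obtain ⟨a, ha, b, hb, p, hp⟩ := Nat.find_spec hex
  have hmin {a' b' : V} (q : G.Walk a' b') (ha' : a' ∈ A) (hb' : b' ∈ B) :
      p.bypass.length ≤ q.length :=
    p.length_bypass_le_length.trans (hp ▸ Nat.find_min' hex ⟨_, ha', _, hb', q, rfl⟩)
  refine ⟨a, ha, b, hb, p.bypass, p.bypass_isPath, fun x hx hxA => ?_, fun x hx hxB => ?_⟩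
  · have hsplit := congrArg Walk.length (p.bypass.take_spec hx)
    have := hmin (p.bypass.dropUntil x hx) hxA hb
    rw [Walk.length_append] at hsplit
    exact (Walk.eq_of_length_eq_zero (p := p.bypass.takeUntil x hx) (by omega)).symm
  · have hsplit := congrArg Walk.length (p.bypass.take_spec hx)
    have := hmin (p.bypass.takeUntil x hx) ha hxB
    rw [Walk.length_append] at hsplit
    exact Walk.eq_of_length_eq_zero (p := p.bypass.dropUntil x hx) (by omega)

/-- The handshaking lemma mod 2, with degrees counted along a symmetric set of directions. -/
theorem sum_sum_ite_adj_add_eq_zero [AddCommGroup V] [DecidableRel G.Adj] (D : Finset V)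
    (hD : ∀ δ ∈ D, -δ ∈ D) (F : Finset V) (hF : ∀ x ∈ F, ∀ δ ∈ D, G.Adj x (x + δ) → x + δ ∈ F) :
    ∑ x ∈ F, ∑ δ ∈ D, (if G.Adj x (x + δ) then 1 else 0 : ZMod 2) = 0 := by
  rw [← Finset.sum_product' (f := fun x δ => (if G.Adj x (x + δ) then 1 else 0 : ZMod 2)),
    ← Finset.sum_filter]
  refine Finset.sum_involution (fun e _ => (e.1 + e.2, -e.2)) (fun _ _ => by decide)
    (fun e he _ hee => ?_) (fun e he => ?_) (fun e _ => by simp)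
  · simp only [Finset.mem_filter] at he
    simp only [Prod.ext_iff, add_eq_left] at hee
    simpa [hee.1] using he.2
  · simp only [Finset.mem_filter, Finset.mem_product] at he ⊢
    exact ⟨⟨hF _ he.1.1 _ he.1.2 he.2, hD _ he.1.2⟩, by simpa using he.2.symm⟩

end SimpleGraph

theorem Finset.sum_Icc_sub_pred {M : Type*} [AddCommGroup M] (g : ℤ → M) {a b : ℤ}
    (hab : a ≤ b) : ∑ i ∈ Finset.Icc (a + 1) b, (g i - g (i - 1)) = g b - g a := by
  induction b, hab using Int.leInduction with
  | base => simp
  | succ b hab ih =>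
    rw [← Finset.insert_Icc_right_eq_Icc_add_one (by omega), Finset.sum_insert (by simp), ih,
      add_sub_cancel_right]
    abel

namespace BondPercolation

open SimpleGraph

lemma gridGraph_adj_iff {x y : ℤ × ℤ} :
    gridGraph.Adj x y ↔ (x.1 - y.1).natAbs + (x.2 - y.2).natAbs = 1 := Iff.rfl

lemma dualCross_horizontal (i j : ℤ) :
    dualCross s((i, j), (i + 1, j)) s((i + 1, j), (i + 1, j + 1)) := ⟨i, j, .inl ⟨rfl, rfl⟩⟩

lemma dualCross_vertical (i j : ℤ) :
    dualCross s((i, j), (i, j + 1)) s((i, j + 1), (i + 1, j + 1)) := ⟨i, j, .inr ⟨rfl, rfl⟩⟩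

lemma dualCross_unique {e e' f : Sym2 (ℤ × ℤ)} (h : dualCross e f) (h' : dualCross e' f) :
    e = e' := by
  obtain ⟨i, j, ⟨rfl, rfl⟩ | ⟨rfl, rfl⟩⟩ := h <;>
    obtain ⟨i', j', ⟨rfl, hf⟩ | ⟨rfl, hf⟩⟩ := h' <;>
    simp only [Sym2.eq_iff, Prod.ext_iff] at hf ⊢ <;> omega

lemma adj_of_dualCross_primal {x y : ℤ × ℤ} {f : Sym2 (ℤ × ℤ)} (h : dualCross s(x, y) f) :
    gridGraph.Adj x y := by
  obtain ⟨i, j, ⟨he, -⟩ | ⟨he, -⟩⟩ := h <;>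
    simp only [Sym2.eq_iff, Prod.ext_iff] at he <;> rw [gridGraph_adj_iff] <;> omega

lemma adj_of_dualCross_dual {e : Sym2 (ℤ × ℤ)} {d d' : ℤ × ℤ} (h : dualCross e s(d, d')) :
    gridGraph.Adj d d' := by
  obtain ⟨i, j, ⟨-, hf⟩ | ⟨-, hf⟩⟩ := h <;>
    simp only [Sym2.eq_iff, Prod.ext_iff] at hf <;> rw [gridGraph_adj_iff] <;> omega

lemma dualClosed_iff {ω : Sym2 (ℤ × ℤ) → Prop} {e f : Sym2 (ℤ × ℤ)} (h : dualCross e f) :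
    dualClosed ω f ↔ ¬ ω e :=
  ⟨fun ⟨_, he', hω⟩ => dualCross_unique h he' ▸ hω, fun hω => ⟨e, h, hω⟩⟩

lemma notMem_edges_of_dualCross {ω : Sym2 (ℤ × ℤ) → Prop} {a b : ℤ × ℤ}
    {p : gridGraph.Walk a b} (hp : ∀ f ∈ p.edges, dualClosed ω f) {e f : Sym2 (ℤ × ℤ)}
    (hf : dualCross e f) (he : ω e) : f ∉ p.edges :=
  fun hmem => (dualClosed_iff hf).1 (hp f hmem) he

/-- The dual edges crossing the horizontal half-line that runs left from the primal vertex `x`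
(dual vertex `(k, l)` sits at `(k - 1/2, l - 1/2)`). -/
def leftRay (x : ℤ × ℤ) : Set (Sym2 (ℤ × ℤ)) :=
  {f | ∃ k ≤ x.1, f = s((k, x.2), (k, x.2 + 1))}

lemma mk_mem_leftRay {x y z : ℤ × ℤ} :
    s(y, z) ∈ leftRay x ↔
      y.1 = z.1 ∧ y.1 ≤ x.1 ∧ (y.2 = x.2 ∧ z.2 = x.2 + 1 ∨ z.2 = x.2 ∧ y.2 = x.2 + 1) := by
  simp only [leftRay, Set.mem_ofPred_eq, Sym2.eq_iff, Prod.ext_iff]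
  constructor
  · rintro ⟨k, hk, h⟩; omega
  · intro h; exact ⟨y.1, by omega⟩

noncomputable def rayParity {a b : ℤ × ℤ} (p : gridGraph.Walk a b) (x : ℤ × ℤ) : ZMod 2 :=
  (p.darts.map fun d => (leftRay x).indicator 1 d.edge).sum

section rayParity

variable {ω : Sym2 (ℤ × ℤ) → Prop} {a b : ℤ × ℤ} {p : gridGraph.Walk a b}

lemma rayParity_right (hp : ∀ f ∈ p.edges, dualClosed ω f) {i j : ℤ}
    (hω : ω s((i, j), (i + 1, j))) : rayParity p (i + 1, j) = rayParity p (i, j) := by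
  classical
  have hf := notMem_edges_of_dualCross hp (dualCross_horizontal i j) hω
  rw [rayParity, rayParity]
  refine congrArg List.sum (List.map_congr_left fun ⟨⟨y, z⟩, _⟩ hd => ?_)
  have hne : s(y, z) ≠ s((i + 1, j), (i + 1, j + 1)) := fun h =>
    hf (h ▸ Walk.edge_mem_edges_of_mem_darts hd)
  simp only [ne_eq, Sym2.eq_iff, Prod.ext_iff] at hne
  simp only [Dart.edge_mk, Set.indicator_apply, mk_mem_leftRay]
  split_ifs <;> first | rfl | omega

/-- Both half-lines meet the dual cut around the segment `[.., i] × {j + 1}` of dual vertices;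
the only other dual edge of that cut crosses the open edge and is not on `p`. -/
lemma rayParity_up (hp : ∀ f ∈ p.edges, dualClosed ω f) {i j : ℤ} (ha : a.2 ≠ j + 1)
    (hb : b.2 ≠ j + 1) (hω : ω s((i, j), (i, j + 1))) :
    rayParity p (i, j + 1) = rayParity p (i, j) := by
  classical
  have hf := notMem_edges_of_dualCross hp (dualCross_vertical i j) hω
  set q : Set (ℤ × ℤ) := {z | z.2 = j + 1 ∧ z.1 ≤ i}
  have hcut : rayParity p (i, j + 1) + rayParity p (i, j) = q.indicator 1 b - q.indicator 1 a := by
    rw [rayParity, rayParity, ← List.sum_map_add, ← p.sum_darts_sub]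
    refine congrArg List.sum (List.map_congr_left fun ⟨⟨y, z⟩, hyz⟩ hd => ?_)
    have hne : s(y, z) ≠ s((i, j + 1), (i + 1, j + 1)) := fun h =>
      hf (h ▸ Walk.edge_mem_edges_of_mem_darts hd)
    rw [gridGraph_adj_iff] at hyz
    dsimp only at hyz
    simp only [ne_eq, Sym2.eq_iff, Prod.ext_iff] at hne
    simp only [Dart.edge_mk, Set.indicator_apply, mk_mem_leftRay, q, Set.mem_ofPred_eq,
      Pi.one_apply]
    split_ifs <;> first | decide | omega
  rwa [Set.indicator_of_notMem (by simp [q, hb]), Set.indicator_of_notMem (by simp [q, ha]),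
    sub_zero, CharTwo.add_eq_zero] at hcut

lemma rayParity_eq_zero {x : ℤ × ℤ} (hp : ∀ z ∈ p.support, x.1 < z.1) : rayParity p x = 0 := by
  refine List.sum_eq_zero fun c hc => ?_
  obtain ⟨⟨⟨y, z⟩, _⟩, hd, rfl⟩ := List.mem_map.1 hc
  have := hp _ (p.dart_fst_mem_support_of_mem_darts hd)
  refine Set.indicator_of_notMem (fun hmem => ?_) _
  rw [Dart.edge_mk, mk_mem_leftRay] at hmem
  simp only at this hmem
  omega

/-- The cut between the dual vertices above and below row `x.2` meets `p` only on the half-line. -/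
lemma rayParity_eq_one {x : ℤ × ℤ} (hp : ∀ z ∈ p.support, z.1 ≤ x.1) (ha : x.2 < a.2)
    (hb : b.2 ≤ x.2) : rayParity p x = 1 := by
  classical
  set q : Set (ℤ × ℤ) := {z | x.2 < z.2}
  have hcut : rayParity p x = q.indicator 1 b - q.indicator 1 a := by
    rw [rayParity, ← p.sum_darts_sub]
    refine congrArg List.sum (List.map_congr_left fun ⟨⟨y, z⟩, hyz⟩ hd => ?_)
    have := hp _ (p.dart_fst_mem_support_of_mem_darts hd)
    rw [gridGraph_adj_iff] at hyz
    simp only [Dart.edge_mk, Set.indicator_apply, mk_mem_leftRay, q, Set.mem_ofPred_eq,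
      Pi.one_apply] at this hyz ⊢
    split_ifs <;> first | decide | omega
  rw [hcut, Set.indicator_of_notMem (by simpa [q] using hb),
    Set.indicator_of_mem (show a ∈ q from ha), Pi.one_apply]
  decide

lemma rayParity_eq_of_adj {n : ℤ} (hp : ∀ f ∈ p.edges, dualClosed ω f) (ha : a.2 = n + 1)
    (hb : b.2 = 0) {x y : ℤ × ℤ} (hxy : gridGraph.Adj x y) (hx : 0 ≤ x.2 ∧ x.2 ≤ n)
    (hy : 0 ≤ y.2 ∧ y.2 ≤ n) (hω : ω s(x, y)) : rayParity p x = rayParity p y := by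
  obtain ⟨x1, x2⟩ := x
  obtain ⟨y1, y2⟩ := y
  rw [gridGraph_adj_iff] at hxy
  dsimp only at hxy hx hy
  rcases (by omega : (y1 = x1 + 1 ∧ y2 = x2) ∨ (x1 = y1 + 1 ∧ x2 = y2) ∨
      (y1 = x1 ∧ y2 = x2 + 1) ∨ (x1 = y1 ∧ x2 = y2 + 1)) with
    ⟨rfl, rfl⟩ | ⟨rfl, rfl⟩ | ⟨rfl, rfl⟩ | ⟨rfl, rfl⟩
  · exact (rayParity_right hp hω).symm
  · exact rayParity_right hp (Sym2.eq_swap ▸ hω)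
  · exact (rayParity_up hp (by omega) (by omega) hω).symm
  · exact rayParity_up hp (by omega) (by omega) (Sym2.eq_swap ▸ hω)

end rayParity

theorem not_openLR_and_closedTB {ω : Sym2 (ℤ × ℤ) → Prop} {m n : ℤ} {u v : ℤ × ℤ}
    {w : gridGraph.Walk u v} (hw : isLRCrossing m n w) (hωw : ∀ e ∈ w.edges, ω e)
    {a b : ℤ × ℤ} {p : gridGraph.Walk a b} (hp : isTBDualCrossing m n p)
    (hcl : ∀ f ∈ p.edges, dualClosed ω f) : False := by
  obtain ⟨-, hu, -, -, hv, hv₀, hvn, hR, -, -⟩ := hw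
  obtain ⟨-, ha, ha₁, ha₁', hb, hb₁, hb₁', hint⟩ := hp
  have hcol : ∀ z ∈ p.support, 1 ≤ z.1 ∧ z.1 ≤ m := by
    intro z hz
    by_cases hza : z = a
    · exact hza ▸ ⟨ha₁, ha₁'⟩
    by_cases hzb : z = b
    · exact hzb ▸ ⟨hb₁, hb₁'⟩
    exact ⟨(hint z hz hza hzb).1, (hint z hz hza hzb).2.1⟩
  have hu0 : rayParity p u = 0 := rayParity_eq_zero fun z hz => by linarith [hcol z hz]
  have hv1 : rayParity p v = 1 :=
    rayParity_eq_one (fun z hz => by linarith [hcol z hz]) (by omega) (by omega)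
  have hconst : rayParity p v - rayParity p u = 0 := by
    rw [← w.sum_darts_sub]
    refine List.sum_eq_zero fun c hc => ?_
    obtain ⟨d, hd, rfl⟩ := List.mem_map.1 hc
    have hfst := hR _ (w.dart_fst_mem_support_of_mem_darts hd)
    have hsnd := hR _ (w.dart_snd_mem_support_of_mem_darts hd)
    rw [sub_eq_zero]
    exact (rayParity_eq_of_adj hcl ha hb d.adj ⟨hfst.2.2.1, hfst.2.2.2⟩ ⟨hsnd.2.2.1, hsnd.2.2.2⟩
      (hωw _ (Walk.edge_mem_edges_of_mem_darts hd))).symm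
  rw [hu0, hv1] at hconst
  exact absurd hconst (by decide)

def rect (m n : ℤ) : Set (ℤ × ℤ) := {x | 0 ≤ x.1 ∧ x.1 ≤ m ∧ 0 ≤ x.2 ∧ x.2 ≤ n}

/-- The dual vertices of the faces of `R` and of the dual rows just above and below it. -/
noncomputable def strip (m n : ℤ) : Finset (ℤ × ℤ) := Finset.Icc 1 m ×ˢ Finset.Icc 0 (n + 1)

lemma mem_strip {m n : ℤ} {d : ℤ × ℤ} :
    d ∈ strip m n ↔ 1 ≤ d.1 ∧ d.1 ≤ m ∧ 0 ≤ d.2 ∧ d.2 ≤ n + 1 := by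
  simp [strip, and_assoc]

def openGraph (ω : Sym2 (ℤ × ℤ) → Prop) (m n : ℤ) : SimpleGraph (ℤ × ℤ) where
  Adj x y := gridGraph.Adj x y ∧ x ∈ rect m n ∧ y ∈ rect m n ∧ ω s(x, y)
  symm := ⟨fun _ _ ⟨h, hx, hy, hω⟩ => ⟨h.symm, hy, hx, Sym2.eq_swap ▸ hω⟩⟩
  loopless := ⟨fun _ h => h.1.ne rfl⟩

lemma openGraph_le (ω : Sym2 (ℤ × ℤ) → Prop) (m n : ℤ) : openGraph ω m n ≤ gridGraph :=
  fun _ _ h => (h : (openGraph ω m n).Adj _ _).1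

def leftCluster (ω : Sym2 (ℤ × ℤ) → Prop) (m n : ℤ) : Set (ℤ × ℤ) :=
  {x | ∃ u ∈ rect m n, u.1 = 0 ∧ (openGraph ω m n).Reachable u x}

section leftCluster

variable {ω : Sym2 (ℤ × ℤ) → Prop} {m n : ℤ}

lemma mem_leftCluster_of_fst_eq_zero {x : ℤ × ℤ} (hx : x ∈ rect m n) (h0 : x.1 = 0) :
    x ∈ leftCluster ω m n :=
  ⟨x, hx, h0, .refl x⟩

lemma mem_leftCluster_of_adj {x y : ℤ × ℤ} (hx : x ∈ leftCluster ω m n)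
    (hxy : (openGraph ω m n).Adj x y) : y ∈ leftCluster ω m n :=
  let ⟨u, hu, hu0, hux⟩ := hx
  ⟨u, hu, hu0, hux.trans hxy.reachable⟩

theorem exists_openLR_of_mem_leftCluster {x : ℤ × ℤ} (hx : x ∈ leftCluster ω m n)
    (hxm : x.1 = m) :
    ∃ (u v : ℤ × ℤ) (w : gridGraph.Walk u v), isLRCrossing m n w ∧ ∀ e ∈ w.edges, ω e := by
  obtain ⟨u, hu, hu0, hux⟩ := hx
  obtain ⟨a, ⟨ha, ha0⟩, b, hbm, p, hpath, hA, hB⟩ :=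
    hux.exists_isPath_between (A := {z | z ∈ rect m n ∧ z.1 = 0}) (B := {z | z.1 = m})
      ⟨hu, hu0⟩ hxm
  have hR := p.mem_of_mem_support_of_adj (fun _ _ (h : (openGraph ω m n).Adj _ _) => h.2.2.1) ha
  have hb := hR b p.end_mem_support
  refine ⟨a, b, p.mapLe (openGraph_le ω m n), ?_, ?_⟩
  · simp only [isLRCrossing, Walk.support_mapLe_eq_support]
    exact ⟨hpath.mapLe _, ha0, ha.2.2.1, ha.2.2.2, hbm, hb.2.2.1, hb.2.2.2, hR,
      fun z hz h0 => hA z hz ⟨hR z hz, h0⟩, hB⟩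
  · intro e he
    rw [Walk.edges_mapLe_eq_edges] at he
    have := p.edges_subset_edgeSet he
    induction e using Sym2.ind with
    | h x y => exact this.2.2.2

end leftCluster

def IsInterface (S : Set (ℤ × ℤ)) (m n : ℤ) (f : Sym2 (ℤ × ℤ)) : Prop :=
  ∃ x ∈ rect m n, ∃ y ∈ rect m n, x ∈ S ∧ y ∉ S ∧ dualCross s(x, y) f

def interfaceGraph (S : Set (ℤ × ℤ)) (m n : ℤ) : SimpleGraph (ℤ × ℤ) :=
  fromEdgeSet {f | IsInterface S m n f}

def topInterfaceCluster (S : Set (ℤ × ℤ)) (m n : ℤ) : Set (ℤ × ℤ) :=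
  {d | ∃ t ∈ strip m n, t.2 = n + 1 ∧ (interfaceGraph S m n).Reachable t d}

section interface

variable {S : Set (ℤ × ℤ)} {m n : ℤ}

lemma isInterface_iff {x y : ℤ × ℤ} {f : Sym2 (ℤ × ℤ)} (h : dualCross s(x, y) f) :
    IsInterface S m n f ↔ x ∈ rect m n ∧ y ∈ rect m n ∧ Xor (x ∈ S) (y ∈ S) := by
  constructor
  · rintro ⟨x', hx', y', hy', hxS, hyS, h'⟩
    rcases Sym2.eq_iff.1 (dualCross_unique h' h) with ⟨rfl, rfl⟩ | ⟨rfl, rfl⟩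
    · exact ⟨hx', hy', .inl ⟨hxS, hyS⟩⟩
    · exact ⟨hy', hx', .inr ⟨hxS, hyS⟩⟩
  · rintro ⟨hx, hy, ⟨hxS, hyS⟩ | ⟨hyS, hxS⟩⟩
    · exact ⟨x, hx, y, hy, hxS, hyS, h⟩
    · exact ⟨y, hy, x, hx, hyS, hxS, Sym2.eq_swap ▸ h⟩

lemma interfaceGraph_adj {d d' : ℤ × ℤ} :
    (interfaceGraph S m n).Adj d d' ↔ IsInterface S m n s(d, d') := by
  refine ⟨fun h => h.1, fun h => ⟨h, ?_⟩⟩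
  obtain ⟨_, _, _, _, _, _, hf⟩ := h
  exact (adj_of_dualCross_dual hf).ne

lemma interfaceGraph_le : interfaceGraph S m n ≤ gridGraph := fun _ _ h =>
  let ⟨_, _, _, _, _, _, hf⟩ := interfaceGraph_adj.1 h
  adj_of_dualCross_dual hf

lemma dualClosed_of_isInterface {ω : Sym2 (ℤ × ℤ) → Prop}
    (hS : ∀ x y, x ∈ S → (openGraph ω m n).Adj x y → y ∈ S) {f : Sym2 (ℤ × ℤ)}
    (hf : IsInterface S m n f) : dualClosed ω f :=
  let ⟨x, hx, y, hy, hxS, hyS, h⟩ := hf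
  (dualClosed_iff h).2 fun hω => hyS (hS x y hxS ⟨adj_of_dualCross_primal h, hx, hy, hω⟩)

/-- Interface edges cannot reach the dual columns `0` and `m + 1`: they would cross an edge of the
left side of `R`, which lies in `S`, or of the right side, which misses it. -/
lemma mem_strip_of_interfaceGraph_adj (hleft : ∀ x ∈ rect m n, x.1 = 0 → x ∈ S)
    (hright : ∀ x ∈ S, x.1 ≠ m) {d d' : ℤ × ℤ} (h : (interfaceGraph S m n).Adj d d') :
    d' ∈ strip m n := by
  obtain ⟨x, hx, y, hy, hxS, hyS, i, j, ⟨he, hf⟩ | ⟨he, hf⟩⟩ := interfaceGraph_adj.1 h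
  all_goals
    have hy0 : y.1 ≠ 0 := fun h0 => hyS (hleft y hy h0)
    have hxm := hright x hxS
    simp only [Sym2.eq_iff, Prod.ext_iff] at he hf
    simp only [rect, Set.mem_ofPred_eq] at hx hy
    rw [mem_strip]
    omega

theorem exists_closedTB_of_mem_topInterfaceCluster {ω : Sym2 (ℤ × ℤ) → Prop}
    (hS : ∀ x y, x ∈ S → (openGraph ω m n).Adj x y → y ∈ S)
    (hleft : ∀ x ∈ rect m n, x.1 = 0 → x ∈ S) (hright : ∀ x ∈ S, x.1 ≠ m) {d : ℤ × ℤ}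
    (hd : d ∈ topInterfaceCluster S m n) (hd0 : d.2 = 0) :
    ∃ (a b : ℤ × ℤ) (p : gridGraph.Walk a b), isTBDualCrossing m n p ∧
      ∀ f ∈ p.edges, dualClosed ω f := by
  obtain ⟨t, ht, ht2, h⟩ := hd
  obtain ⟨a, ⟨ha, ha2⟩, b, hb2, p, hpath, hA, hB⟩ :=
    h.exists_isPath_between (A := {z | z ∈ strip m n ∧ z.2 = n + 1}) (B := {z | z.2 = 0})
      ⟨ht, ht2⟩ hd0
  have hstrip := p.mem_of_mem_support_of_adj
    (fun _ _ h => mem_strip_of_interfaceGraph_adj hleft hright h) (SetLike.mem_coe.2 ha)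
  have hb := mem_strip.1 (hstrip b p.end_mem_support)
  rw [mem_strip] at ha
  refine ⟨a, b, p.mapLe interfaceGraph_le, ?_, ?_⟩
  · simp only [isTBDualCrossing, Walk.support_mapLe_eq_support]
    refine ⟨hpath.mapLe _, ha2, ha.1, ha.2.1, hb2, hb.1, hb.2.1, fun z hz hza hzb => ?_⟩
    have hzS : z ∈ strip m n := hstrip z hz
    have h1 : z.2 ≠ n + 1 := fun h => hza (hA z hz ⟨hzS, h⟩)
    have h2 : z.2 ≠ 0 := fun h => hzb (hB z hz h)
    rw [mem_strip] at hzS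
    omega
  · intro f hf
    rw [Walk.edges_mapLe_eq_edges] at hf
    have := p.edges_subset_edgeSet hf
    induction f using Sym2.ind with
    | h x y => exact dualClosed_of_isInterface hS (interfaceGraph_adj.1 this)

end interface

def dirs : Finset (ℤ × ℤ) := {(0, 1), (0, -1), (1, 0), (-1, 0)}

open Classical in
noncomputable def interfaceDeg (S : Set (ℤ × ℤ)) (m n : ℤ) (d : ℤ × ℤ) : ZMod 2 :=
  ∑ δ ∈ dirs, if (interfaceGraph S m n).Adj d (d + δ) then 1 else 0

open Classical in
noncomputable def cutIndicator (S : Set (ℤ × ℤ)) (m n : ℤ) (x y : ℤ × ℤ) : ZMod 2 :=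
  if x ∈ rect m n ∧ y ∈ rect m n then S.indicator 1 x + S.indicator 1 y else 0

section interfaceDeg

variable {S : Set (ℤ × ℤ)} {m n : ℤ}

open Classical in
lemma ite_interfaceGraph_adj {x y d d' : ℤ × ℤ} (h : dualCross s(x, y) s(d, d')) :
    (if (interfaceGraph S m n).Adj d d' then 1 else 0 : ZMod 2) = cutIndicator S m n x y := by
  rw [interfaceGraph_adj, isInterface_iff h, cutIndicator]
  by_cases hxS : x ∈ S <;> by_cases hyS : y ∈ S <;> simp [hxS, hyS, CharTwo.add_self_eq_zero]

lemma interfaceDeg_eq (i j : ℤ) :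
    interfaceDeg S m n (i, j) =
      cutIndicator S m n (i - 1, j) (i, j) + (cutIndicator S m n (i - 1, j - 1) (i, j - 1) +
      (cutIndicator S m n (i, j - 1) (i, j) + cutIndicator S m n (i - 1, j - 1) (i - 1, j))) := by
  have hup : dualCross s((i - 1, j), (i, j)) s((i, j), (i, j) + (0, 1)) := by
    simpa using dualCross_horizontal (i - 1) j
  have hdown : dualCross s((i - 1, j - 1), (i, j - 1)) s((i, j), (i, j) + (0, -1)) := by
    have := dualCross_horizontal (i - 1) (j - 1)
    rw [Sym2.eq_swap (a := (i - 1 + 1, j - 1))] at this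
    simpa [sub_eq_add_neg] using this
  have hright : dualCross s((i, j - 1), (i, j)) s((i, j), (i, j) + (1, 0)) := by
    simpa using dualCross_vertical i (j - 1)
  have hleft : dualCross s((i - 1, j - 1), (i - 1, j)) s((i, j), (i, j) + (-1, 0)) := by
    have := dualCross_vertical (i - 1) (j - 1)
    rw [Sym2.eq_swap (a := (i - 1, j - 1 + 1))] at this
    simpa [sub_eq_add_neg] using this
  rw [interfaceDeg, dirs, Finset.sum_insert (by decide), Finset.sum_insert (by decide),
    Finset.sum_insert (by decide), Finset.sum_singleton, ite_interfaceGraph_adj hup,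
    ite_interfaceGraph_adj hdown, ite_interfaceGraph_adj hright, ite_interfaceGraph_adj hleft]

lemma cutIndicator_of_mem {x y : ℤ × ℤ} (hx : x ∈ rect m n) (hy : y ∈ rect m n) :
    cutIndicator S m n x y = S.indicator 1 x + S.indicator 1 y :=
  if_pos ⟨hx, hy⟩

lemma cutIndicator_of_right_notMem {x y : ℤ × ℤ} (hy : y ∉ rect m n) :
    cutIndicator S m n x y = 0 :=
  if_neg fun h => hy h.2

lemma interfaceDeg_of_mem_interior {i j : ℤ} (hi : 1 ≤ i ∧ i ≤ m) (hj : 1 ≤ j ∧ j ≤ n) :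
    interfaceDeg S m n (i, j) = 0 := by
  have hR {k l : ℤ} (hk : i - 1 ≤ k ∧ k ≤ i) (hl : j - 1 ≤ l ∧ l ≤ j) : (k, l) ∈ rect m n := by
    simp only [rect, Set.mem_ofPred_eq]; omega
  rw [interfaceDeg_eq]
  repeat rw [cutIndicator_of_mem (hR (by omega) (by omega)) (hR (by omega) (by omega))]
  generalize (S.indicator 1 (i - 1, j - 1) : ZMod 2) = a,
    (S.indicator 1 (i, j - 1) : ZMod 2) = b, (S.indicator 1 (i - 1, j) : ZMod 2) = c,
    (S.indicator 1 (i, j) : ZMod 2) = e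
  revert a b c e
  decide

lemma interfaceDeg_top {i : ℤ} (hi : 1 ≤ i ∧ i ≤ m) (hn : 0 ≤ n) :
    interfaceDeg S m n (i, n + 1) = S.indicator 1 (i, n) + S.indicator 1 (i - 1, n) := by
  have hout {k : ℤ} : (k, n + 1) ∉ rect m n := fun h => by
    simp only [rect, Set.mem_ofPred_eq] at h; omega
  have hin {k : ℤ} (hk : i - 1 ≤ k ∧ k ≤ i) : (k, n) ∈ rect m n := by
    simp only [rect, Set.mem_ofPred_eq]; omega
  rw [interfaceDeg_eq, add_sub_cancel_right, cutIndicator_of_right_notMem hout,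
    cutIndicator_of_mem (hin (by omega)) (hin (by omega)), cutIndicator_of_right_notMem hout,
    cutIndicator_of_right_notMem hout, zero_add, add_zero, add_zero, add_comm]

theorem exists_mem_topInterfaceCluster_snd_eq_zero (hm : 0 ≤ m) (hn : 0 ≤ n)
    (hleft : ∀ x ∈ rect m n, x.1 = 0 → x ∈ S) (hright : ∀ x ∈ S, x.1 ≠ m) :
    ∃ d ∈ topInterfaceCluster S m n, d.2 = 0 := by
  classical
  by_contra! hnone
  have hsum :
      ∑ d ∈ (strip m n).filter (· ∈ topInterfaceCluster S m n), interfaceDeg S m n d = 0 := by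
    refine sum_sum_ite_adj_add_eq_zero dirs (by decide) _ fun d hd δ _ hadj => ?_
    obtain ⟨-, t, ht, ht2, hreach⟩ := Finset.mem_filter.1 hd
    exact Finset.mem_filter.2 ⟨mem_strip_of_interfaceGraph_adj hleft hright hadj,
      t, ht, ht2, hreach.trans hadj.reachable⟩
  have hcolumn : ∀ i ∈ Finset.Icc 1 m,
      ∑ j ∈ Finset.Icc 0 (n + 1),
        (if (i, j) ∈ topInterfaceCluster S m n then interfaceDeg S m n (i, j) else 0) =
        S.indicator 1 (i, n) + S.indicator 1 (i - 1, n) := by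
    intro i hi
    rw [Finset.mem_Icc] at hi
    have htop : (i, n + 1) ∈ topInterfaceCluster S m n :=
      ⟨(i, n + 1), mem_strip.2 (by omega), rfl, .refl _⟩
    rw [Finset.sum_eq_single (n + 1), if_pos htop, interfaceDeg_top hi hn]
    · intro j hj hjn
      rw [Finset.mem_Icc] at hj
      by_cases hj0 : j = 0
      · exact if_neg fun h => hnone _ h hj0
      · rw [interfaceDeg_of_mem_interior hi (by omega), ite_self]
    · exact fun h => absurd (Finset.mem_Icc.2 ⟨by omega, le_rfl⟩) h
  have htelescope := Finset.sum_Icc_sub_pred (fun i => (S.indicator 1 (i, n) : ZMod 2)) hm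
  simp only [CharTwo.sub_eq_add, zero_add] at htelescope
  rw [Finset.sum_filter, strip, Finset.sum_product, Finset.sum_congr rfl hcolumn, htelescope,
    Set.indicator_of_notMem (fun h => hright _ h rfl),
    Set.indicator_of_mem (hleft (0, n) (by simp only [rect, Set.mem_ofPred_eq]; omega) rfl),
    Pi.one_apply] at hsum
  exact absurd hsum (by decide)

end interfaceDeg

theorem openLR_or_closedTB {m n : ℤ} (hm : 0 ≤ m) (hn : 0 ≤ n) (ω : Sym2 (ℤ × ℤ) → Prop) :
    (∃ (u v : ℤ × ℤ) (w : gridGraph.Walk u v), isLRCrossing m n w ∧ ∀ e ∈ w.edges, ω e) ∨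
      ∃ (a b : ℤ × ℤ) (p : gridGraph.Walk a b), isTBDualCrossing m n p ∧
        ∀ f ∈ p.edges, dualClosed ω f := by
  by_cases hLR : ∃ x ∈ leftCluster ω m n, x.1 = m
  · obtain ⟨x, hx, hxm⟩ := hLR
    exact .inl (exists_openLR_of_mem_leftCluster hx hxm)
  · push Not at hLR
    have hleft : ∀ x ∈ rect m n, x.1 = 0 → x ∈ leftCluster ω m n :=
      fun _ => mem_leftCluster_of_fst_eq_zero
    obtain ⟨d, hd, hd0⟩ := exists_mem_topInterfaceCluster_snd_eq_zero hm hn hleft hLR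
    exact .inr (exists_closedTB_of_mem_topInterfaceCluster (fun _ _ => mem_leftCluster_of_adj)
      hleft hLR hd hd0)

end BondPercolation

/-- In bond percolation on the `m × n` rectangle `R`, exactly one of the
following holds: `R` contains an open left-right crossing, or `R` contains a
closed dual top-bottom crossing. -/
theorem open_LR_xor_closed_dual_TB (m n : ℤ) (hm : 2 ≤ m) (hn : 2 ≤ n)
    (ω : Sym2 (ℤ × ℤ) → Prop) :
    Xor' (∃ (u v : ℤ × ℤ) (w : gridGraph.Walk u v), isLRCrossing m n w ∧
            ∀ e ∈ w.edges, ω e)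
         (∃ (a b : ℤ × ℤ) (w : gridGraph.Walk a b), isTBDualCrossing m n w ∧
            ∀ f ∈ w.edges, dualClosed ω f) :=
  (xor_iff_or_and_not_and _ _).2 ⟨BondPercolation.openLR_or_closedTB (by omega) (by omega) ω,
    fun ⟨⟨_, _, _, hw, hωw⟩, ⟨_, _, _, hp, hcl⟩⟩ =>
      BondPercolation.not_openLR_and_closedTB hw hωw hp hcl⟩
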